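/- arXiv:math/0003165 — 2 statements merged into one kernel-verified Lean document; each statement's English description precedes it below -/
import Mathlib

section
/- Let (r_n)_{n∈ω} be a sequence of elements of R such that r_n ≠ 0 for infinitely many n. Then there exist ε_n ∈ {0,1} (n ∈ ω) such that the sum Σ_{n∈ω} r_n q_n ε_n lies in the S-adic completion R̂ of R but not in R; equivalently, there exist ε_n ∈ {0,1} such that no element r ∈ R satisfies r ≡ Σ_{n<m} r_n q_n ε_n (mod q_m R) for every m ∈ ω. -/
/-!
Encode a choice of `ε n ∈ {0,1}` as a point `b` of the Cantor space `ℕ → Bool`. For a fixed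
`x ∈ R`, the set of `b` whose partial sums converge to `x` is closed, since each congruence
only involves finitely many digits. It has empty interior: flipping a digit `n` with
`r n q n ≠ 0` moves every later partial sum by `± r n q n`, which lies in no `q m R` for large `m`
since these ideals decrease to `0`, and such flips approach `b` as `n → ∞`. As `R` is countable, Baire's
theorem leaves a point of the Cantor space outside all of these sets.
-/

open Filter Topology Finset Function

section DigitSums

variable {R : Type*} [CommRing R] (I : ℕ → Ideal R) (a : ℕ → R)

def digitsConvergingTo (x : R) : Set (ℕ → Bool) :=
  {b | ∀ m, x - ∑ n ∈ range m, (if b n then a n else 0) ∈ I m}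

lemma sum_apply_update_sub_sum {ι β M : Type*} [DecidableEq ι] [AddCommGroup M] {s : Finset ι}
    {n : ι} (hn : n ∈ s) (f : ι → β → M) (b : ι → β) (c : β) :
    ∑ i ∈ s, f i (update b n c i) - ∑ i ∈ s, f i (b i) = f n c - f n (b n) := by
  rw [← add_sum_erase s (fun i => f i (b i)) hn]
  simp only [apply_update f, sum_update_of_mem hn, sdiff_singleton_eq_erase]
  abel

lemma isClosed_digitsConvergingTo (x : R) : IsClosed (digitsConvergingTo I a x) := by
  have hrestrict : ∀ m, Continuous fun (b : ℕ → Bool) (i : Fin m) => b i :=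
    fun m => continuous_pi fun i => continuous_apply _
  simp only [digitsConvergingTo, Set.ofPred_forall, sum_range]
  exact isClosed_iInter fun m =>
    (isClosed_discrete {d : Fin m → Bool | x - ∑ i, (if d i then a i else 0) ∈ I m}).preimage
      (hrestrict m)

variable {I a}

lemma eq_zero_of_update_mem_digitsConvergingTo (hI : Antitone I)
    (hsep : ∀ y, (∀ m, y ∈ I m) → y = 0) {x : R} {b : ℕ → Bool} {n : ℕ}
    (hb : b ∈ digitsConvergingTo I a x) (hflip : update b n (!b n) ∈ digitsConvergingTo I a x) :
    a n = 0 := by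
  have hdiff : ∀ m, n < m → (if !b n then a n else 0) - (if b n then a n else 0) ∈ I m := by
    intro m hnm
    rw [← sum_apply_update_sub_sum (mem_range.2 hnm) (fun i (d : Bool) => if d then a i else 0)]
    simpa using (I m).sub_mem (hb m) (hflip m)
  apply hsep
  intro m
  have hmem := hI (le_max_left m (n + 1)) (hdiff _ (by omega))
  cases hbn : b n <;> simpa [hbn] using hmem

lemma tendsto_update_atTop_nhds {X : ℕ → Type*} [∀ i, TopologicalSpace (X i)] (b : ∀ i, X i)
    (c : ∀ n, X n) : Tendsto (fun n => update b n (c n)) atTop (𝓝 b) :=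
  tendsto_pi_nhds.2 fun i => tendsto_const_nhds.congr'
    ((eventually_gt_atTop i).mono fun _ hn => (update_of_ne hn.ne _ _).symm)

lemma interior_digitsConvergingTo_eq_empty (hI : Antitone I)
    (hsep : ∀ y, (∀ m, y ∈ I m) → y = 0) (ha : {n | a n ≠ 0}.Infinite) (x : R) :
    interior (digitsConvergingTo I a x) = ∅ := by
  refine Set.eq_empty_iff_forall_notMem.2 fun b hb => ?_
  have hflips : ∀ᶠ n in atTop, update b n (!b n) ∈ digitsConvergingTo I a x :=
    (tendsto_update_atTop_nhds b fun n => !b n).eventually (mem_interior_iff_mem_nhds.1 hb)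
  obtain ⟨n, hflip, hn⟩ := (hflips.and_frequently (Nat.frequently_atTop_iff_infinite.2 ha)).exists
  exact hn (eq_zero_of_update_mem_digitsConvergingTo hI hsep (interior_subset hb) hflip)

theorem exists_digits_forall_notMem_digitsConvergingTo [Countable R] (hI : Antitone I)
    (hsep : ∀ y, (∀ m, y ∈ I m) → y = 0) (ha : {n | a n ≠ 0}.Infinite) :
    ∃ b : ℕ → Bool, ∀ x, b ∉ digitsConvergingTo I a x := by
  by_contra! hcover
  obtain ⟨x, hx⟩ := nonempty_interior_of_iUnion_of_closed (isClosed_digitsConvergingTo I a)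
    (Set.iUnion_eq_univ_iff.2 hcover)
  simp [interior_digitsConvergingTo_eq_empty hI hsep ha x] at hx

end DigitSums

theorem observation_sum_in_completion_not_in_R_general
    {R : Type} [CommRing R] [IsDomain R] [Countable R]
    (s : ℕ → R) (hsne : ∀ n, s n ≠ 0)
    (q : ℕ → R) (hq : ∀ n, q n = ∏ i ∈ Finset.range n, s i)
    (hsep : ∀ x : R, (∀ n, x ∈ Ideal.span {q n}) → x = 0)
    (r : ℕ → R) (hr : {n : ℕ | r n ≠ 0}.Infinite) :
    ∃ ε : ℕ → R, (∀ n, ε n = 0 ∨ ε n = 1) ∧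
      ¬ ∃ x : R, ∀ m : ℕ,
        x - ∑ n ∈ Finset.range m, r n * q n * ε n ∈ Ideal.span {q m} := by
  have hI : Antitone fun m => Ideal.span {q m} := fun m m' hmm' => by
    rw [Ideal.span_singleton_le_span_singleton, hq, hq]
    exact prod_dvd_prod_of_subset _ _ _ (range_subset_range.2 hmm')
  have hqne : ∀ n, q n ≠ 0 := fun n => by
    rw [hq]
    exact prod_ne_zero_iff.2 fun i _ => hsne i
  have ha : {n | r n * q n ≠ 0}.Infinite :=
    hr.mono fun n hn => mul_ne_zero hn (hqne n)
  obtain ⟨b, hb⟩ := exists_digits_forall_notMem_digitsConvergingTo hI hsep ha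
  refine ⟨fun n => if b n then 1 else 0, fun n => by cases b n <;> simp, ?_⟩
  rintro ⟨x, hx⟩
  exact hb x fun m => by simpa only [mul_boole] using hx m

/-- **Observation 1.2** (Göbel–Shelah, "Decompositions of Reflexive Modules").
If `r n ≠ 0` infinitely often, then there are `ε n ∈ {0,1}` such that
`Σ_{n} r n * q n * ε n` lies in the `S`-adic completion of `R` but not in `R`;
equivalently, no element `x ∈ R` is congruent to all the partial sums
`Σ_{n<m} r n * q n * ε n` modulo `q m R`. -/
theorem observation_sum_in_completion_not_in_R
    {R : Type} [CommRing R] [IsDomain R] [IsPrincipalIdealRing R] [Countable R]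
    (hRf : ¬ IsField R)
    (s : ℕ → R) (hs0 : s 0 = 1) (hsne : ∀ n, s n ≠ 0)
    (hmul : ∀ m n, ∃ k, s m * s n = s k)
    (q : ℕ → R) (hq : ∀ n, q n = ∏ i ∈ Finset.range n, s i)
    (hsep : ∀ x : R, (∀ n, x ∈ Ideal.span {q n}) → x = 0)
    (r : ℕ → R) (hr : {n : ℕ | r n ≠ 0}.Infinite) :
    ∃ ε : ℕ → R, (∀ n, ε n = 0 ∨ ε n = 1) ∧
      ¬ ∃ x : R, ∀ m : ℕ,
        x - ∑ n ∈ Finset.range m, r n * q n * ε n ∈ Ideal.span {q m} :=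
  observation_sum_in_completion_not_in_R_general s hsne q hq hsep r hr
end

section
/- Assume CH. Let G be an R-module of cardinality ℵ₁ with an ℵ₁-filtration G = ⋃_{α<ω₁} G_α, and let E ⊆ ω₁ be a stationary subset of ω₁. Then there is a family of functions {φ_α : G_α → G_α : α ∈ E} such that for every function φ : G → G and every countable subset A of G there is an ordinal β ∈ E (in fact an unbounded set of such ordinals β ∈ E) with φ ↾ A = φ_β ↾ (G_β ∩ A); in particular A ⊆ G_β. -/
/-- The first uncountable ordinal `ω₁`. -/
noncomputable def omega1 : Ordinal := (Cardinal.aleph 1).ord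

/-- `C` is a closed unbounded (club) subset of `ω₁`. -/
noncomputable def IsClubBelowOmega1 (C : Set Ordinal) : Prop :=
  C ⊆ Set.Iio omega1 ∧
  (∀ α < omega1, ∃ β ∈ C, α < β) ∧
  (∀ α, α < omega1 → α ≠ 0 → (∀ β < α, ∃ γ ∈ C, β < γ ∧ γ < α) → α ∈ C)

/-- `E` is a stationary subset of `ω₁`: it meets every club. -/
noncomputable def IsStationaryInOmega1 (E : Set Ordinal) : Prop :=
  E ⊆ Set.Iio omega1 ∧ ∀ C : Set Ordinal, IsClubBelowOmega1 C → (E ∩ C).Nonempty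

/-!
Under CH there are only `ℵ₁` sequences `ℕ → G × G`, and every countable piece `φ ↾ A` of a function
`φ : G → G` is listed by one of them. A stationary set `E` is unbounded in `ω₁`, so `ℵ₁ × ℵ₁` injects
into `E`; reading off the second coordinate assigns a code to each `β ∈ E` in such a way that every
code is assigned to unboundedly many `β`. Given `φ` and `A`, choose `δ < ω₁` with `A ∪ φ A ⊆ G_δ`
and a `β > δ` in `E` carrying the code of `φ ↾ A`; then `φ_β`, the decoded partial function cut down
to `G_β`, agrees with `φ` on `A`.
-/

open Cardinal Ordinal Set

theorem omega1_eq_omega_one : omega1 = ω₁ := ord_aleph 1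

namespace Ordinal

theorem exists_lt_omega_one_subset_Iic_of_countable {S : Set Ordinal.{u}} (hS : S.Countable)
    (hlt : S ⊆ Iio ω₁) : ∃ δ < ω₁, S ⊆ Iic δ := by
  have : Countable S := hS.to_subtype
  exact ⟨⨆ x : S, (x : Ordinal), iSup_lt_omega_one fun x ↦ hlt x.2,
    fun x hx ↦ Ordinal.le_iSup (fun x : S ↦ (x : Ordinal)) ⟨x, hx⟩⟩

theorem countable_Iic_of_lt_omega_one {γ : Ordinal.{u}} (hγ : γ < ω₁) : (Iic γ).Countable := by
  rw [← Iio_add_one_eq_Iic, ← le_aleph0_iff_set_countable, Cardinal.mk_Iio_ordinal, lift_le_aleph0,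
    ← lt_aleph_one_iff, ← lt_omega_iff_card_lt]
  exact (isSuccLimit_omega 1).add_one_lt hγ

theorem forall_exists_gt_iff_not_countable {S : Set Ordinal.{u}} (hS : S ⊆ Iio ω₁) :
    (∀ γ < ω₁, ∃ β ∈ S, γ < β) ↔ ¬ S.Countable := by
  constructor
  · intro hunb hcount
    obtain ⟨δ, hδ, hSδ⟩ := exists_lt_omega_one_subset_Iic_of_countable hcount hS
    obtain ⟨β, hβS, hδβ⟩ := hunb δ hδ
    exact (hSδ hβS).not_gt hδβ
  · intro hunc γ hγ
    by_contra! hbdd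
    exact hunc ((countable_Iic_of_lt_omega_one hγ).mono hbdd)

theorem not_countable_Iio_omega_one : ¬ (Iio ω₁ : Set Ordinal.{u}).Countable :=
  (forall_exists_gt_iff_not_countable subset_rfl).1 fun γ hγ ↦
    ⟨γ + 1, (isSuccLimit_omega 1).add_one_lt hγ, lt_add_one γ⟩

theorem nonempty_Iio_omega_one_prod_embedding {E : Set Ordinal.{u}} (hE : E ⊆ Iio ω₁)
    (hunb : ∀ γ < ω₁, ∃ β ∈ E, γ < β) {C : Type v} (hC : #C ≤ ℵ₁) :
    Nonempty (Iio (ω₁ : Ordinal.{u}) × C ↪ E) := by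
  rw [← lift_mk_le']
  calc Cardinal.lift.{u + 1} #(Iio (ω₁ : Ordinal.{u}) × C) ≤ ℵ₁ := by
        rw [mk_prod, Cardinal.lift_mul, Cardinal.lift_lift, Cardinal.lift_lift,
          Cardinal.mk_Iio_ordinal, Cardinal.lift_lift]
        simp only [card_omega, Cardinal.lift_aleph, lift_one]
        calc ℵ₁ * Cardinal.lift.{u + 1} #C ≤ ℵ₁ * ℵ₁ := by
              gcongr
              simpa using Cardinal.lift_le.{u + 1}.2 hC
          _ = ℵ₁ := mul_eq_self (aleph0_le_aleph 1)
    _ ≤ Cardinal.lift.{max (u + 1) v} #E := by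
        rw [← succ_aleph0, Order.succ_le_iff, aleph0_lt_lift, aleph0_lt_mk_iff,
          ← not_countable_iff]
        exact (forall_exists_gt_iff_not_countable hE).1 hunb

theorem exists_map_with_unbounded_fibers {E : Set Ordinal.{u}} (hE : E ⊆ Iio ω₁)
    (hunb : ∀ γ < ω₁, ∃ β ∈ E, γ < β) {C : Type v} [Nonempty C] (hC : #C ≤ ℵ₁) :
    ∃ code : Ordinal.{u} → C, ∀ c, ∀ γ < ω₁, ∃ β ∈ E, γ < β ∧ code β = c := by
  obtain ⟨ι⟩ := nonempty_Iio_omega_one_prod_embedding hE hunb hC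
  have : Nonempty (Iio (ω₁ : Ordinal.{u})) := ⟨⟨0, omega_pos 1⟩⟩
  let label : Iio ω₁ × C → Ordinal := fun p ↦ ι p
  have hlabel : Function.Injective label := Subtype.val_injective.comp ι.injective
  refine ⟨fun β ↦ (Function.invFun label β).2, fun c γ hγ ↦ ?_⟩
  have hfiber : ¬ (range fun α : Iio ω₁ ↦ label (α, c)).Countable := by
    intro hcount
    have := hcount.to_subtype
    have : Countable (Iio (ω₁ : Ordinal.{u})) :=
      (Equiv.ofInjective (fun α ↦ label (α, c))
        (hlabel.comp (Prod.mk_left_injective c))).injective.countable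
    exact not_countable_Iio_omega_one (to_countable _)
  obtain ⟨_, ⟨α, rfl⟩, hγα⟩ := (forall_exists_gt_iff_not_countable
    (range_subset_iff.2 fun α ↦ hE (ι (α, c)).2)).2 hfiber γ hγ
  refine ⟨_, (ι (α, c)).2, hγα, ?_⟩
  show (Function.invFun label (label (α, c))).2 = c
  rw [Function.leftInverse_invFun hlabel]

end Ordinal

theorem isClubBelowOmega1_Ioo {γ : Ordinal} (hγ : γ < ω₁) : IsClubBelowOmega1 (Ioo γ omega1) := by
  rw [IsClubBelowOmega1, omega1_eq_omega_one]
  refine ⟨fun _ h ↦ h.2, fun α hα ↦ ?_, fun α hα hα0 hcl ↦ ?_⟩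
  · have hαγ : max α γ + 1 < ω₁ := (isSuccLimit_omega 1).add_one_lt (max_lt hα hγ)
    exact ⟨_, ⟨(le_max_right α γ).trans_lt (lt_add_one _), hαγ⟩,
      (le_max_left α γ).trans_lt (lt_add_one _)⟩
  · obtain ⟨β, hβ, -, hβα⟩ := hcl 0 (pos_iff_ne_zero.2 hα0)
    exact ⟨hβ.1.trans hβα, hα⟩

theorem IsStationaryInOmega1.forall_exists_gt {E : Set Ordinal} (hE : IsStationaryInOmega1 E) :
    ∀ γ < ω₁, ∃ β ∈ E, γ < β := by
  intro γ hγ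
  obtain ⟨β, hβE, hγβ, -⟩ := hE.2 _ (isClubBelowOmega1_Ioo hγ)
  exact ⟨β, hβE, hγβ⟩

theorem Cardinal.mk_nat_arrow_le_aleph_one {α : Type u}
    (hCH : (2 : Cardinal.{w}) ^ ℵ₀ = ℵ₁) (hα : #α ≤ ℵ₁) : #(ℕ → α) ≤ ℵ₁ := by
  have hc : (𝔠 : Cardinal.{u}) = ℵ₁ := Cardinal.lift_injective.{w} <| by
    rw [lift_continuum, ← lift_continuum.{u}, ← two_power_aleph0, hCH, lift_aleph, lift_aleph,
      Ordinal.lift_one, Ordinal.lift_one]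
  calc #(ℕ → α) = #α ^ ℵ₀ := by simp
    _ ≤ 𝔠 ^ ℵ₀ := power_le_power_right (hc ▸ hα)
    _ = ℵ₁ := by rw [continuum_power_aleph0, hc]

theorem Submodule.exists_lt_omega_one_subset_of_countable {R M : Type*} [Semiring R]
    [AddCommMonoid M] [Module R M] {F : Ordinal.{u} → Submodule R M}
    (hmono : ∀ α β, α ≤ β → β < ω₁ → F α ≤ F β) (hunion : ⨆ (α) (_ : α < ω₁), F α = ⊤)
    {A : Set M} (hA : A.Countable) : ∃ δ < ω₁, A ⊆ F δ := by
  have hmem (x : M) : ∃ α < ω₁, x ∈ F α := by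
    have hdir : Directed (· ≤ ·) fun α : {α : Ordinal.{u} // α < ω₁} ↦ F α := fun α β ↦
      have hαβ : max (α : Ordinal) β < ω₁ := max_lt α.2 β.2
      ⟨⟨_, hαβ⟩, hmono _ _ (le_max_left _ _) hαβ, hmono _ _ (le_max_right _ _) hαβ⟩
    have : Nonempty {α : Ordinal.{u} // α < ω₁} := ⟨⟨0, omega_pos 1⟩⟩
    have hx : x ∈ ⨆ α : {α : Ordinal.{u} // α < ω₁}, F α := by
      rw [iSup_subtype'] at hunion
      exact hunion ▸ Submodule.mem_top
    obtain ⟨⟨α, hα⟩, hxα⟩ := (mem_iSup_of_directed _ hdir).1 hx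
    exact ⟨α, hα, hxα⟩
  choose α hα hxα using hmem
  obtain ⟨δ, hδ, hαδ⟩ := exists_lt_omega_one_subset_Iic_of_countable (hA.image α)
    (image_subset_iff.2 fun x _ ↦ hα x)
  exact ⟨δ, hδ, fun x hx ↦ hmono _ _ (hαδ (mem_image_of_mem α hx)) hδ (hxα x)⟩

section DecodeGraph

variable {M : Type*} [Zero M]

/-- `c` enumerates the graph of a countable partial function `M ⇀ M`. -/
noncomputable def decodeGraph (S : Set M) (c : ℕ → M × M) : M → M :=
  S.indicator id ∘ Function.extend (Prod.fst ∘ c) (Prod.snd ∘ c) 0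

theorem decodeGraph_mem {S : Set M} (hS : (0 : M) ∈ S) (c : ℕ → M × M) (x : M) :
    decodeGraph S c x ∈ S := by
  classical
  rw [decodeGraph, Function.comp_apply, indicator_apply]
  split_ifs with hx
  exacts [hx, hS]

theorem decodeGraph_graph {S : Set M} (φ : M → M) (a : ℕ → M) (n : ℕ) (h : φ (a n) ∈ S) :
    decodeGraph S (fun n ↦ (a n, φ (a n))) (a n) = φ (a n) := by
  have hext : Function.extend a (φ ∘ a) 0 (a n) = φ (a n) :=
    (Function.FactorsThrough.rfl.comp_left φ).extend_apply 0 n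
  rw [decodeGraph, Function.comp_apply]
  exact hext ▸ indicator_of_mem h id

end DecodeGraph

theorem prediction_lemma_general
    {R : Type} [CommRing R]
    (hCH : (2 : Cardinal) ^ Cardinal.aleph0 = Cardinal.aleph 1)
    {G : Type} [AddCommGroup G] [Module R G]
    (hGcard : Cardinal.mk G = Cardinal.aleph 1)
    (Gfil : Ordinal → Submodule R G)
    (hmono : ∀ α β : Ordinal, α ≤ β → β < omega1 → Gfil α ≤ Gfil β)
    (hunion : (⨆ (α : Ordinal) (_ : α < omega1), Gfil α) = ⊤)
    (E : Set Ordinal) (hE : IsStationaryInOmega1 E) :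
    ∃ f : Ordinal → G → G,
      (∀ β ∈ E, ∀ x ∈ Gfil β, f β x ∈ Gfil β) ∧
      ∀ (φ : G → G) (A : Set G), A.Countable →
        ∀ γ < omega1, ∃ β ∈ E, γ < β ∧ A ⊆ (Gfil β : Set G) ∧
          ∀ a ∈ A, φ a = f β a := by
  rw [omega1_eq_omega_one] at hmono hunion ⊢
  have hEω : E ⊆ Iio ω₁ := omega1_eq_omega_one ▸ hE.1
  obtain ⟨code, hcode⟩ := exists_map_with_unbounded_fibers hEω hE.forall_exists_gt
    (mk_nat_arrow_le_aleph_one hCH (by rw [mk_prod, hGcard]; simp [mul_eq_self]))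
  refine ⟨fun β ↦ decodeGraph (Gfil β) (code β), fun β _ x _ ↦ decodeGraph_mem (zero_mem _) _ x,
    fun φ A hA γ hγ ↦ ?_⟩
  obtain ⟨a, hAa⟩ := countable_iff_exists_subset_range.1 hA
  obtain ⟨δ, hδ, hδA⟩ := Submodule.exists_lt_omega_one_subset_of_countable hmono hunion
    (hA.union (hA.image φ))
  obtain ⟨β, hβE, hβ, hcodeβ⟩ := hcode (fun n ↦ (a n, φ (a n))) (max γ δ) (max_lt hγ hδ)
  have hδβ : Gfil δ ≤ Gfil β := hmono _ _ ((le_max_right _ _).trans hβ.le) (hEω hβE)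
  refine ⟨β, hβE, (le_max_left _ _).trans_lt hβ, fun x hx ↦ hδβ (hδA (.inl hx)), fun x hx ↦ ?_⟩
  obtain ⟨n, rfl⟩ := hAa hx
  dsimp only
  rw [hcodeβ, decodeGraph_graph φ a n (hδβ (hδA (.inr (mem_image_of_mem φ hx))))]

/-- **Lemma 1.3** (the prediction lemma, assuming CH).  If `G` is an `R`-module of
cardinality `ℵ₁` with an `ℵ₁`-filtration `G = ⋃_{α<ω₁} G_α` and `E ⊆ ω₁` is stationary,
then there is a family of functions `φ_β : G_β → G_β` (β ∈ E) such that any function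
`φ : G → G` is predicted on any countable set `A ⊆ G`: there are unboundedly many
`β ∈ E` with `A ⊆ G_β` and `φ ↾ A = φ_β ↾ (G_β ∩ A)`. -/
theorem prediction_lemma
    {R : Type} [CommRing R] [IsDomain R] [IsPrincipalIdealRing R] [Countable R]
    (hRf : ¬ IsField R)
    (hCH : (2 : Cardinal) ^ Cardinal.aleph0 = Cardinal.aleph 1)
    {G : Type} [AddCommGroup G] [Module R G]
    (hGcard : Cardinal.mk G = Cardinal.aleph 1)
    (Gfil : Ordinal → Submodule R G)
    (hmono : ∀ α β : Ordinal, α ≤ β → β < omega1 → Gfil α ≤ Gfil β)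
    (hcount : ∀ α < omega1, (Gfil α : Set G).Countable)
    (hcont : ∀ δ : Ordinal, δ < omega1 → Order.IsSuccLimit δ →
      Gfil δ = ⨆ (α : Ordinal) (_ : α < δ), Gfil α)
    (hunion : (⨆ (α : Ordinal) (_ : α < omega1), Gfil α) = ⊤)
    (E : Set Ordinal) (hE : IsStationaryInOmega1 E) :
    ∃ f : Ordinal → G → G,
      (∀ β ∈ E, ∀ x ∈ Gfil β, f β x ∈ Gfil β) ∧
      ∀ (φ : G → G) (A : Set G), A.Countable →
        ∀ γ < omega1, ∃ β ∈ E, γ < β ∧ A ⊆ (Gfil β : Set G) ∧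
          ∀ a ∈ A, φ a = f β a :=
  prediction_lemma_general hCH hGcard Gfil hmono hunion E hE
end
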